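/- arXiv:2510.19344 — 2 statements merged into one kernel-verified Lean document; each statement's English description precedes it below -/
import Mathlib

section
/- The associated graded algebra of the Weyl algebra $A_n$ with respect to the Bernstein filtration is commutative; concretely, if $a \in \mathcal{B}_i A_n$ and $b \in \mathcal{B}_j A_n$, then $[a,b] \in \mathcal{B}_{i+j-2} A_n$. -/
variable (n : ℕ)

/-- The defining relations of the `n`-th Weyl algebra: the `x`'s commute, the `y`'s
commute, and `yᵢ xⱼ = xⱼ yᵢ + δᵢⱼ`. Here `Sum.inl i` is `xᵢ` and `Sum.inr i` is `yᵢ`. -/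
inductive WeylRel : FreeAlgebra ℂ (Fin n ⊕ Fin n) → FreeAlgebra ℂ (Fin n ⊕ Fin n) → Prop
  | xx (i j : Fin n) : WeylRel
      (FreeAlgebra.ι ℂ (Sum.inl i) * FreeAlgebra.ι ℂ (Sum.inl j))
      (FreeAlgebra.ι ℂ (Sum.inl j) * FreeAlgebra.ι ℂ (Sum.inl i))
  | yy (i j : Fin n) : WeylRel
      (FreeAlgebra.ι ℂ (Sum.inr i) * FreeAlgebra.ι ℂ (Sum.inr j))
      (FreeAlgebra.ι ℂ (Sum.inr j) * FreeAlgebra.ι ℂ (Sum.inr i))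
  | yx (i j : Fin n) : WeylRel
      (FreeAlgebra.ι ℂ (Sum.inr i) * FreeAlgebra.ι ℂ (Sum.inl j))
      (FreeAlgebra.ι ℂ (Sum.inl j) * FreeAlgebra.ι ℂ (Sum.inr i) +
        if i = j then 1 else 0)

/-- The `n`-th Weyl algebra `Aₙ(ℂ)`. -/
abbrev WeylAlgebra : Type := RingQuot (WeylRel n)

/-- The span of `1` together with the generators `x₁,…,xₙ,y₁,…,yₙ`; its `i`-th power
is the `i`-th piece `𝓑ᵢ Aₙ` of the Bernstein filtration (the span of monomials of
total degree at most `i` in the generators). -/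
noncomputable def bernsteinGen : Submodule ℂ (WeylAlgebra n) :=
  Submodule.span ℂ
    (insert 1 (Set.range fun v => RingQuot.mkAlgHom ℂ (WeylRel n) (FreeAlgebra.ι ℂ v)))

/-- Commutator of two generators is a scalar. -/
lemma comm_gen (v w : Fin n ⊕ Fin n) :
    RingQuot.mkAlgHom ℂ (WeylRel n) (FreeAlgebra.ι ℂ v) *
      RingQuot.mkAlgHom ℂ (WeylRel n) (FreeAlgebra.ι ℂ w) -
    RingQuot.mkAlgHom ℂ (WeylRel n) (FreeAlgebra.ι ℂ w) *
      RingQuot.mkAlgHom ℂ (WeylRel n) (FreeAlgebra.ι ℂ v) ∈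
    (1 : Submodule ℂ (WeylAlgebra n)) := by
  have key : ∀ p q : FreeAlgebra ℂ (Fin n ⊕ Fin n), WeylRel n p q →
      RingQuot.mkAlgHom ℂ (WeylRel n) p = RingQuot.mkAlgHom ℂ (WeylRel n) q :=
    fun p q h => RingQuot.mkAlgHom_rel ℂ h
  rcases v with i | i <;> rcases w with j | j
  · have := key _ _ (WeylRel.xx i j)
    simp only [map_mul] at this
    rw [this]; simp
  ·
    have := key _ _ (WeylRel.yx j i)
    simp only [map_mul, map_add] at this
    have h2 : RingQuot.mkAlgHom ℂ (WeylRel n) (FreeAlgebra.ι ℂ (Sum.inl i)) *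
        RingQuot.mkAlgHom ℂ (WeylRel n) (FreeAlgebra.ι ℂ (Sum.inr j)) -
        RingQuot.mkAlgHom ℂ (WeylRel n) (FreeAlgebra.ι ℂ (Sum.inr j)) *
        RingQuot.mkAlgHom ℂ (WeylRel n) (FreeAlgebra.ι ℂ (Sum.inl i)) =
        - RingQuot.mkAlgHom ℂ (WeylRel n) (if j = i then 1 else 0) := by
      rw [this]; abel
    rw [h2]
    rcases eq_or_ne j i with h | h
    · simp only [h, if_pos rfl, map_one]
      exact Submodule.mem_one.2 ⟨-1, by simp⟩
    · simp [h]
  · have := key _ _ (WeylRel.yx i j)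
    simp only [map_mul, map_add] at this
    have h2 : RingQuot.mkAlgHom ℂ (WeylRel n) (FreeAlgebra.ι ℂ (Sum.inr i)) *
        RingQuot.mkAlgHom ℂ (WeylRel n) (FreeAlgebra.ι ℂ (Sum.inl j)) -
        RingQuot.mkAlgHom ℂ (WeylRel n) (FreeAlgebra.ι ℂ (Sum.inl j)) *
        RingQuot.mkAlgHom ℂ (WeylRel n) (FreeAlgebra.ι ℂ (Sum.inr i)) =
        RingQuot.mkAlgHom ℂ (WeylRel n) (if i = j then 1 else 0) := by
      rw [this]; abel
    rw [h2]
    rcases eq_or_ne i j with h | h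
    · simp only [h, if_pos rfl, map_one]
      exact Submodule.mem_one.2 ⟨1, by simp⟩
    · simp [h]
  · have := key _ _ (WeylRel.yy i j)
    simp only [map_mul] at this
    rw [this]; simp

/-- Commutator of two degree-one elements is a scalar. -/
lemma comm_B (a b : WeylAlgebra n) (ha : a ∈ bernsteinGen n) (hb : b ∈ bernsteinGen n) :
    a * b - b * a ∈ (1 : Submodule ℂ (WeylAlgebra n)) := by
  induction ha using Submodule.span_induction with
  | mem x hx =>
    induction hb using Submodule.span_induction with
    | mem y hy =>
      rcases hx with rfl | ⟨v, rfl⟩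
      · simp
      rcases hy with rfl | ⟨w, rfl⟩
      · simp
      exact comm_gen n v w
    | zero => simp
    | add u v hu hv ihu ihv =>
      have h : x * (u + v) - (u + v) * x = (x * u - u * x) + (x * v - v * x) := by noncomm_ring
      rw [h]; exact add_mem ihu ihv
    | smul c u hu ihu =>
      have h : x * (c • u) - (c • u) * x = c • (x * u - u * x) := by
        rw [mul_smul_comm, smul_mul_assoc, smul_sub]
      rw [h]; exact Submodule.smul_mem _ _ ihu
  | zero => simp
  | add u v hu hv ihu ihv =>
    have h : (u + v) * b - b * (u + v) = (u * b - b * u) + (v * b - b * v) := by noncomm_ring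
    rw [h]; exact add_mem ihu ihv
  | smul c u hu ihu =>
    have h : (c • u) * b - b * (c • u) = c • (u * b - b * u) := by
      rw [mul_smul_comm, smul_mul_assoc, smul_sub]
    rw [h]; exact Submodule.smul_mem _ _ ihu

lemma pow_zero_comm (b : WeylAlgebra n) (hb : b ∈ bernsteinGen n ^ 0) (a : WeylAlgebra n) :
    a * b - b * a = 0 := by
  rw [pow_zero] at hb
  obtain ⟨c, rfl⟩ := Submodule.mem_one.1 hb
  rw [Algebra.commutes, sub_self]

lemma comm_one_pow (j : ℕ) (a : WeylAlgebra n) (ha : a ∈ bernsteinGen n) :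
    ∀ b ∈ bernsteinGen n ^ j, a * b - b * a ∈ bernsteinGen n ^ (j - 1) := by
  induction j with
  | zero =>
    intro b hb
    rw [pow_zero_comm n b hb a]
    exact zero_mem _
  | succ j ih =>
    intro b hb
    rw [pow_succ] at hb
    refine Submodule.mul_induction_on (C := fun b => a * b - b * a ∈ bernsteinGen n ^ (j + 1 - 1))
      hb ?_ ?_
    · intro x hx z hz
      have h : a * (x * z) - x * z * a = x * (a * z - z * a) + (a * x - x * a) * z := by
        simp only [mul_sub, sub_mul, mul_assoc]; abel
      rw [h, Nat.add_sub_cancel]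
      apply add_mem
      · have h1 := Submodule.mul_mem_mul hx (comm_B n a z ha hz)
        rwa [mul_one] at h1
      · rcases Nat.eq_zero_or_pos j with rfl | hj
        · rw [pow_zero_comm n x hx a, zero_mul]
          exact zero_mem _
        · have h2 := Submodule.mul_mem_mul (ih x hx) hz
          rwa [← pow_succ, Nat.sub_add_cancel hj] at h2
    · intro u v hu hv
      have h : a * (u + v) - (u + v) * a = (a * u - u * a) + (a * v - v * a) := by noncomm_ring
      rw [h]; exact add_mem hu hv

lemma comm_pow_pow (i j : ℕ) (hj : 1 ≤ j) (b : WeylAlgebra n) (hb : b ∈ bernsteinGen n ^ j) :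
    ∀ a ∈ bernsteinGen n ^ i, a * b - b * a ∈ bernsteinGen n ^ (i + j - 2) := by
  induction i with
  | zero =>
    intro a ha
    have h0 := pow_zero_comm n a ha b
    rw [sub_eq_zero] at h0
    rw [← h0, sub_self]
    exact zero_mem _
  | succ i ih =>
    intro a ha
    rw [pow_succ] at ha
    refine Submodule.mul_induction_on
      (C := fun a => a * b - b * a ∈ bernsteinGen n ^ (i + 1 + j - 2)) ha ?_ ?_
    · intro x hx z hz
      have h : x * z * b - b * (x * z) = x * (z * b - b * z) + (x * b - b * x) * z := by
        simp only [mul_sub, sub_mul, mul_assoc]; abel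
      rw [h]
      apply add_mem
      · have h1 := Submodule.mul_mem_mul hx (comm_one_pow n j z hz b hb)
        rwa [← pow_add, show i + (j - 1) = i + 1 + j - 2 by omega] at h1
      · rcases Nat.eq_zero_or_pos i with rfl | hi
        · have h0 := pow_zero_comm n x hx b
          rw [sub_eq_zero] at h0
          rw [← h0, sub_self, zero_mul]
          exact zero_mem _
        · have h2 := Submodule.mul_mem_mul (ih x hx) hz
          rwa [← pow_succ, show i + j - 2 + 1 = i + 1 + j - 2 by omega] at h2
    · intro u v hu hv
      have h : (u + v) * b - b * (u + v) = (u * b - b * u) + (v * b - b * v) := by noncomm_ring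
      rw [h]; exact add_mem hu hv


/-- The associated graded of the Weyl algebra with respect to the Bernstein
filtration is commutative: if `a ∈ 𝓑ᵢ Aₙ` and `b ∈ 𝓑ⱼ Aₙ` then
`[a, b] ∈ 𝓑_{i+j-2} Aₙ`. -/
theorem bernstein_commutator (i j : ℕ) (a b : WeylAlgebra n)
    (ha : a ∈ bernsteinGen n ^ i) (hb : b ∈ bernsteinGen n ^ j) :
    a * b - b * a ∈ bernsteinGen n ^ (i + j - 2) := by
  rcases Nat.eq_zero_or_pos j with rfl | hj
  · rw [pow_zero_comm n b hb a]
    exact zero_mem _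
  · exact comm_pow_pow n i j hj b hb a ha
end

section
/- Bass's Stable Range Theorem for zero-dimensional rings: if $R$ is a commutative Artinian (equivalently, Noetherian of Krull dimension $0$) ring and $aR + bR = R$, then there exists $f \in R$ such that $(a + bf)R = R$. -/
/-!
An Artinian ring has only finitely many maximal ideals. Modulo each maximal ideal `M` some
`c_M` makes `a + b * c_M` a non-zero residue (take `c_M = 0` if `a ∉ M`, else `c_M = 1`, since then
`b ∉ M`), and the Chinese remainder theorem glues the `c_M` into one `f`; then `a + b * f` lies in
no maximal ideal, so it is a unit.
-/

namespace Ideal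

variable {R : Type*} [CommRing R]

theorem exists_add_mul_notMem_of_span_pair_eq_top {a b : R} (h : span {a, b} = ⊤)
    {I : Ideal R} (hI : I ≠ ⊤) : ∃ c, a + b * c ∉ I := by
  by_cases ha : a ∈ I
  · have hb : b ∉ I := fun hb ↦
      hI <| top_le_iff.1 <| h ▸ span_le.2 (Set.insert_subset_iff.2 ⟨ha, by simpa using hb⟩)
    exact ⟨1, by rwa [mul_one, I.add_mem_iff_right ha]⟩
  · exact ⟨0, by rwa [mul_zero, add_zero]⟩

theorem exists_span_add_mul_eq_top_of_finite_maximal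
    (hfin : {M : Ideal R | M.IsMaximal}.Finite) {a b : R} (h : span {a, b} = ⊤) :
    ∃ f, span {a + b * f} = ⊤ := by
  have := hfin.to_subtype
  choose c hc using fun M : {M : Ideal R | M.IsMaximal} ↦
    exists_add_mul_notMem_of_span_pair_eq_top h M.2.ne_top
  have hcop : Pairwise fun M N : {M : Ideal R | M.IsMaximal} ↦ IsCoprime M.1 N.1 :=
    fun M N hMN ↦ isCoprime_iff_sup_eq.2 (M.2.coprime_of_ne N.2 (Subtype.coe_ne_coe.2 hMN))
  obtain ⟨f, hf⟩ := exists_forall_sub_mem_ideal hcop c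
  refine ⟨f, by_contra fun hne ↦ ?_⟩
  obtain ⟨M, hM, hle⟩ := exists_le_maximal _ hne
  have hmem : a + b * f ∈ M := hle (mem_span_singleton_self _)
  have hdiff : a + b * f - (a + b * c ⟨M, hM⟩) ∈ M := by
    rw [show a + b * f - (a + b * c ⟨M, hM⟩) = b * (f - c ⟨M, hM⟩) by ring]
    exact M.mul_mem_left b (hf ⟨M, hM⟩)
  exact hc ⟨M, hM⟩ (by simpa only [sub_sub_cancel] using M.sub_mem hmem hdiff)

end Ideal

/-- Bass's Stable Range Theorem for zero-dimensional rings: if `R` is a commutative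
Artinian ring and `aR + bR = R`, then there exists `f` with `(a + b * f) R = R`. -/
theorem stable_range_artinian (R : Type*) [CommRing R] [IsArtinianRing R]
    (a b : R) (h : Ideal.span ({a, b} : Set R) = ⊤) :
    ∃ f : R, Ideal.span ({a + b * f} : Set R) = ⊤ :=
  Ideal.exists_span_add_mul_eq_top_of_finite_maximal (IsArtinianRing.setOfPred_isMaximal_finite R) h
end
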